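/- Let φ : Ŝ → ℤ be any group homomorphism satisfying φ(x_s) = 0 and φ(y_s) = 1 for every s ∈ {0,1}^{<ℕ} and φ(p_n) = 0 for every n ≥ 0. Then the kernel of φ equals S; that is, for g ∈ Ŝ one has φ(g) = 0 if and only if g ∈ S. Equivalently, S equals the commutator subgroup [Ŝ, Ŝ]. -/

import Mathlib

/-!
Products are in composition order, as in the group `Cantor ≃ₜ Cantor`.

All `y_s` are congruent modulo `S`, on the left (`y_a⁻¹ y_b ∈ S`) and on the right
(`y_a y_b⁻¹ ∈ S`). The seed is the generator `y₁₁₀⁻¹ y₁₀` of `S`; elements of `T` mapping cones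
rigidly onto cones transport such congruences, and the expansion relation
`y_s = y_{s11} y_{s10}⁻¹ y_{s0} x_s` trades a cone for its children. Every generator of `S` acts
rigidly on some cone, so these congruences make each `y_s` normalize `S`, whence
`Ŝ = S ⟨y₁₀⟩`. As `φ` kills `S` and sends `y₁₀` to `1`, its kernel is `S`; and `[Ŝ, Ŝ] ≤ ker φ`
because `ℤ` is abelian.

Conversely, `y_a⁻¹ y_b` and `x_a⁻¹ x_b` are commutators for nonempty `a`, `b` (conjugate by an
element of `T`), which puts `y₁₁₀⁻¹ y₁₀` and, by the expansion relation at `1`, also `x₁` into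
`[Ŝ, Ŝ]`. In the abelianization the relations `p₁ = p₀ x⁻¹`, `p₂ = p₁ x₁⁻¹`, `p₁³ = p₂⁴ = 1` and
`x p₀ x⁻¹ = p₂²` then kill `x` and `p₀`, and `p_{n+1} = p_n x_{1ⁿ}⁻¹` kills every `p_n`.
-/

/-- The Cantor set of infinite binary sequences. -/
abbrev Cantor : Type := ℕ → Bool

/-- Concatenation of a finite binary sequence with an infinite binary sequence. -/
def cat (s : List Bool) (η : Cantor) : Cantor :=
  fun n => if h : n < s.length then s.get ⟨n, h⟩ else η (n - s.length)

/-- `s` is a (finite) prefix of the infinite sequence `ξ`. -/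
def IsPrefixOf (s : List Bool) (ξ : Cantor) : Prop := ∃ η : Cantor, ξ = cat s η

/-- The group of self-homeomorphisms of a topological space, with
`(f * g) ξ = f (g ξ)` (i.e. in the right-action convention `ξ·(g h) = (ξ·g)·h`,
the product `g * f` corresponds to the word "apply `f`, then `g`"). -/
instance {α : Type*} [TopologicalSpace α] : Group (α ≃ₜ α) where
  mul f g := g.trans f
  one := Homeomorph.refl α
  inv := Homeomorph.symm
  mul_assoc _ _ _ := Homeomorph.ext fun _ => rfl
  one_mul _ := Homeomorph.ext fun _ => rfl
  mul_one _ := Homeomorph.ext fun _ => rfl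
  inv_mul_cancel f := Homeomorph.ext fun ξ => f.symm_apply_apply ξ

@[simp] lemma homeo_mul_apply {α : Type*} [TopologicalSpace α] (f g : α ≃ₜ α) (ξ : α) :
    (f * g) ξ = f (g ξ) := rfl

@[simp] lemma homeo_one_apply {α : Type*} [TopologicalSpace α] (ξ : α) :
    (1 : α ≃ₜ α) ξ = ξ := rfl

@[simp] lemma homeo_inv_apply {α : Type*} [TopologicalSpace α] (f : α ≃ₜ α) (ξ : α) :
    (f⁻¹ : α ≃ₜ α) ξ = f.symm ξ := rfl

/-- The data of the basic homeomorphisms `x`, `y`, `x_s`, `y_s`, `p_n` of the Cantor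
set, together with their recursive defining equations. -/
structure LMData where
  x : Cantor ≃ₜ Cantor
  y : Cantor ≃ₜ Cantor
  xx : List Bool → Cantor ≃ₜ Cantor
  yy : List Bool → Cantor ≃ₜ Cantor
  p : ℕ → Cantor ≃ₜ Cantor
  hx00 : ∀ η, x (cat [false, false] η) = cat [false] η
  hx01 : ∀ η, x (cat [false, true] η) = cat [true, false] η
  hx1 : ∀ η, x (cat [true] η) = cat [true, true] η
  hy00 : ∀ η, y (cat [false, false] η) = cat [false] (y η)
  hy01 : ∀ η, y (cat [false, true] η) = cat [true, false] (y.symm η)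
  hy1 : ∀ η, y (cat [true] η) = cat [true, true] (y η)
  hxx : ∀ s η, xx s (cat s η) = cat s (x η)
  hxx' : ∀ s ξ, ¬ IsPrefixOf s ξ → xx s ξ = ξ
  hyy : ∀ s η, yy s (cat s η) = cat s (y η)
  hyy' : ∀ s ξ, ¬ IsPrefixOf s ξ → yy s ξ = ξ
  hp1 : ∀ n k η, k < n → p n (cat (List.replicate k true ++ [false]) η) =
      cat (List.replicate (k + 1) true ++ [false]) η
  hp2 : ∀ n η, p n (cat (List.replicate n true ++ [false]) η) =
      cat (List.replicate (n + 1) true) η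
  hp3 : ∀ n η, p n (cat (List.replicate (n + 1) true) η) = cat [false] η

/-- Thompson's group `T`, generated by all `x_s` and all `p_n`. -/
def Tgrp (D : LMData) : Subgroup (Cantor ≃ₜ Cantor) :=
  Subgroup.closure (Set.range D.xx ∪ Set.range D.p)

/-- The group `Ŝ`, generated by all `x_s`, all `y_s` and all `p_n`. -/
def Shat (D : LMData) : Subgroup (Cantor ≃ₜ Cantor) :=
  Subgroup.closure (Set.range D.xx ∪ Set.range D.yy ∪ Set.range D.p)

/-- The homeomorphism `y₁₀ y₁₁₀⁻¹` (right-action word: first `y₁₀`, then `y₁₁₀⁻¹`). -/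
def sgen (D : LMData) : Cantor ≃ₜ Cantor :=
  (D.yy [true, true, false])⁻¹ * D.yy [true, false]

/-- The group `S`, generated by Thompson's group `T` together with `y₁₀ y₁₁₀⁻¹`. -/
def Sgrp (D : LMData) : Subgroup (Cantor ≃ₜ Cantor) :=
  Subgroup.closure (↑(Tgrp D) ∪ {sgen D})

/-- The Lodha–Moore group `_yG_y`, generated by all `x_s` and all `y_s`. -/
def LMgrp (D : LMData) : Subgroup (Cantor ≃ₜ Cantor) :=
  Subgroup.closure (Set.range D.xx ∪ Set.range D.yy)


open List (replicate nil_prefix cons_prefix_cons prefix_append_right_inj)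

lemma Subgroup.mem_normalizer_closure_of_conj {G : Type*} [Group G] {s : Set G} {g : G}
    (h₁ : ∀ x ∈ s, g * x * g⁻¹ ∈ Subgroup.closure s)
    (h₂ : ∀ x ∈ s, g⁻¹ * x * g ∈ Subgroup.closure s) :
    g ∈ Subgroup.normalizer (Subgroup.closure s : Set G) := by
  rw [Subgroup.mem_normalizer_iff_map_conj_eq, MonoidHom.map_closure]
  refine le_antisymm (Subgroup.closure_le _ |>.mpr ?_) (Subgroup.closure_le _ |>.mpr ?_)
  · rintro _ ⟨x, hx, rfl⟩
    exact h₁ x hx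
  · intro x hx
    rw [← MonoidHom.map_closure]
    exact ⟨g⁻¹ * x * g, h₂ x hx, by simp [mul_assoc]⟩

lemma Subgroup.inv_mul_conj_mem_commutator {G : Type*} [Group G] {H : Subgroup G} {f u : G}
    (hf : f ∈ H) (hu : u ∈ H) : f⁻¹ * (u * f * u⁻¹) ∈ ⁅H, H⁆ := by
  simpa [commutatorElement_def, mul_assoc] using Subgroup.commutator_mem_commutator (inv_mem hf) hu

lemma Subgroup.mk_mem_commutator_iff {G : Type*} [Group G] {H : Subgroup G} {g : G} (hg : g ∈ H) :
    (⟨g, hg⟩ : H) ∈ _root_.commutator H ↔ g ∈ ⁅H, H⁆ := by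
  rw [← H.map_subtype_commutator]
  exact (Subgroup.mem_map_iff_mem H.subtype_injective).symm

lemma mem_commutator_of_relations {G : Type*} [Group G] {a b c u v : G}
    (hc : c ∈ commutator G) (hu : u = a * b⁻¹) (hv : v = u * c⁻¹) (hu3 : u ^ 3 = 1)
    (hv4 : v ^ 4 = 1) (hbab : b * a * b⁻¹ = v ^ 2) :
    a ∈ commutator G ∧ b ∈ commutator G := by
  simp only [← Abelianization.ker_of, MonoidHom.mem_ker] at hc ⊢
  replace hu := congrArg Abelianization.of hu
  replace hv := congrArg Abelianization.of hv
  replace hu3 := congrArg Abelianization.of hu3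
  replace hv4 := congrArg Abelianization.of hv4
  replace hbab := congrArg Abelianization.of hbab
  simp only [map_mul, map_inv, map_pow, map_one, hc, inv_one, mul_one] at hu hv hu3 hv4 hbab
  rw [mul_inv_cancel_comm] at hbab
  rw [hv] at hv4 hbab
  -- Now `v = u` in the abelianization, so the order of `u` divides both 3 and 4.
  have hu1 : Abelianization.of u = 1 := by
    calc Abelianization.of u = Abelianization.of u ^ 4 * (Abelianization.of u ^ 3)⁻¹ := by group
      _ = 1 := by rw [hv4, hu3, inv_one, one_mul]
  have ha : Abelianization.of a = 1 := by rw [hbab, hu1, one_pow]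
  rw [hu1, ha, one_mul, eq_comm, inv_eq_one] at hu
  exact ⟨ha, hu⟩

/-! ### Cones of the Cantor set -/

@[simp] lemma cat_nil (η : Cantor) : cat [] η = η := by
  funext n; simp [cat]

@[simp] lemma cat_cons_zero (b : Bool) (s : List Bool) (η : Cantor) : cat (b :: s) η 0 = b := by
  simp [cat]

@[simp] lemma cat_cons_succ (b : Bool) (s : List Bool) (η : Cantor) (n : ℕ) :
    cat (b :: s) η (n + 1) = cat s η n := by
  by_cases h : n < s.length <;> simp [cat, h]

lemma cat_append (s t : List Bool) (η : Cantor) : cat (s ++ t) η = cat s (cat t η) := by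
  induction s with
  | nil => simp
  | cons b s ih => funext n; cases n <;> simp [ih]

lemma cat_injective (s : List Bool) : Function.Injective (cat s) := by
  induction s with
  | nil => exact fun η η' h => by simpa using h
  | cons b s ih => exact fun η η' h => ih (funext fun n => by simpa using congrFun h (n + 1))

lemma prefix_or_prefix_of_cat_eq {s t : List Bool} {η η' : Cantor} (h : cat s η = cat t η') :
    s <+: t ∨ t <+: s := by
  induction s generalizing t with
  | nil => exact .inl nil_prefix
  | cons b s ih =>
    cases t with
    | nil => exact .inr nil_prefix
    | cons b' t =>
      obtain rfl : b = b' := by simpa using congrFun h 0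
      simpa using ih (t := t) (funext fun n => by simpa using congrFun h (n + 1))

lemma exists_cat_singleton (ξ : Cantor) : ∃ b η, ξ = cat [b] η :=
  ⟨ξ 0, fun n => ξ (n + 1), funext fun n => by cases n <;> simp⟩

lemma exists_cat_staircase (m : ℕ) (ξ : Cantor) :
    (∃ k < m, ∃ η, ξ = cat (replicate k true ++ [false]) η) ∨
      ∃ η, ξ = cat (replicate m true) η := by
  induction m generalizing ξ with
  | zero => exact .inr ⟨ξ, by simp⟩
  | succ m ih =>
    obtain ⟨b, η, rfl⟩ := exists_cat_singleton ξ
    cases b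
    · exact .inl ⟨0, by omega, η, by simp⟩
    · rcases ih η with ⟨k, hk, ζ, rfl⟩ | ⟨ζ, rfl⟩
      · exact .inl ⟨k + 1, by omega, ζ, by rw [← cat_append]; rfl⟩
      · exact .inr ⟨ζ, by rw [← cat_append]; rfl⟩

lemma ext_staircase {f g : Cantor ≃ₜ Cantor} (m : ℕ)
    (hlt : ∀ k < m, ∀ η, f (cat (replicate k true ++ [false]) η) =
      g (cat (replicate k true ++ [false]) η))
    (htop : ∀ η, f (cat (replicate m true) η) = g (cat (replicate m true) η)) : f = g := by
  ext1 ξ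
  rcases exists_cat_staircase m ξ with ⟨k, hk, η, rfl⟩ | ⟨η, rfl⟩
  exacts [hlt k hk η, htop η]

lemma IsPrefixOf.cancel_left {s c : List Bool} {η : Cantor} (h : IsPrefixOf (s ++ c) (cat s η)) :
    IsPrefixOf c η := by
  obtain ⟨ζ, e⟩ := h
  exact ⟨ζ, cat_injective s (by rwa [cat_append] at e)⟩

lemma IsPrefixOf.of_append_left {a c : List Bool} {ξ : Cantor} (h : IsPrefixOf (a ++ c) ξ) :
    IsPrefixOf a ξ := by
  obtain ⟨ζ, rfl⟩ := h
  exact ⟨cat c ζ, cat_append a c ζ⟩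

/-- The cones of `s` and `t` are disjoint. -/
def Incomp (s t : List Bool) : Prop := ¬ s <+: t ∧ ¬ t <+: s

instance (s t : List Bool) : Decidable (Incomp s t) := inferInstanceAs (Decidable (_ ∧ _))

lemma Incomp.symm {s t : List Bool} (h : Incomp s t) : Incomp t s := ⟨h.2, h.1⟩

lemma incomp_cons {b c : Bool} (h : b ≠ c) (s t : List Bool) : Incomp (b :: s) (c :: t) :=
  ⟨fun hp => h (cons_prefix_cons.mp hp).1, fun hp => h (cons_prefix_cons.mp hp).1.symm⟩

lemma Incomp.append_left {s t : List Bool} (h : Incomp s t) (c : List Bool) :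
    Incomp (c ++ s) (c ++ t) :=
  ⟨fun hp => h.1 ((prefix_append_right_inj c).mp hp),
    fun hp => h.2 ((prefix_append_right_inj c).mp hp)⟩

lemma Incomp.not_isPrefixOf_cat {s t : List Bool} (h : Incomp s t) (η : Cantor) :
    ¬ IsPrefixOf s (cat t η) := by
  rintro ⟨η', e⟩
  rcases prefix_or_prefix_of_cat_eq e.symm with hp | hp
  exacts [h.1 hp, h.2 hp]

abbrev Homeo : Type := Cantor ≃ₜ Cantor

/-! ### Homeomorphisms supported on a cone -/

def LocalAt (f : Homeo) (a : List Bool) (g : Homeo) : Prop :=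
  (∀ η, f (cat a η) = cat a (g η)) ∧ ∀ ξ, ¬ IsPrefixOf a ξ → f ξ = ξ

abbrev Rigid (f : Homeo) (a b : List Bool) : Prop := ∀ η, f (cat a η) = cat b η

namespace LocalAt

variable {f f' g g' : Homeo} {a : List Bool}

lemma inv (h : LocalAt f a g) : LocalAt f⁻¹ a g⁻¹ := by
  refine ⟨fun η => ?_, fun ξ hξ => ?_⟩
  · rw [← f.symm_apply_apply (cat a (g⁻¹ η)), h.1]; simp
  · conv_lhs => rw [← h.2 ξ hξ]
    exact f.symm_apply_apply ξ

lemma mul (h : LocalAt f a g) (h' : LocalAt f' a g') : LocalAt (f * f') a (g * g') :=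
  ⟨fun η => by simp [h'.1, h.1], fun ξ hξ => by simp [h'.2 ξ hξ, h.2 ξ hξ]⟩

lemma eq (h : LocalAt f a g) (h' : LocalAt f' a g) : f = f' := by
  ext1 ξ
  by_cases hp : IsPrefixOf a ξ
  · obtain ⟨η, rfl⟩ := hp
    rw [h.1, h'.1]
  · rw [h.2 ξ hp, h'.2 ξ hp]

lemma rigid_of_incomp (h : LocalAt f a g) {c : List Bool} (hc : Incomp a c) : Rigid f c c :=
  fun η => h.2 _ (hc.not_isPrefixOf_cat η)

lemma commute {b : List Bool} (h : LocalAt f a g) (h' : LocalAt f' b g') (hab : Incomp a b) :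
    Commute f f' := by
  ext1 ξ
  show f (f' ξ) = f' (f ξ)
  by_cases ha : IsPrefixOf a ξ
  · obtain ⟨η, rfl⟩ := ha
    rw [h'.rigid_of_incomp hab.symm, h.1, h'.rigid_of_incomp hab.symm]
  by_cases hb : IsPrefixOf b ξ
  · obtain ⟨η, rfl⟩ := hb
    rw [h.rigid_of_incomp hab, h'.1, h.rigid_of_incomp hab]
  rw [h.2 ξ ha, h'.2 ξ hb, h.2 ξ ha]

end LocalAt

namespace Rigid

variable {f u v : Homeo} {a b c : List Bool}

lemma inv (h : Rigid f a b) : Rigid f⁻¹ b a := fun η => by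
  rw [← h η]; exact f.symm_apply_apply _

lemma comp (h : Rigid u a b) (h' : Rigid v b c) : Rigid (v * u) a c := fun η => by
  simp [h η, h' η]

lemma append (h : Rigid f a b) (c : List Bool) : Rigid f (a ++ c) (b ++ c) := fun η => by
  rw [cat_append, cat_append, h]

lemma conj {g : Homeo} (hu : Rigid u a b) (hf : LocalAt f a g) : LocalAt (u * f * u⁻¹) b g := by
  refine ⟨fun η => by simp [hu.inv η, hf.1, hu (g η)], fun ξ hξ => ?_⟩
  have hna : ¬ IsPrefixOf a (u⁻¹ ξ) := by
    rintro ⟨η, hη⟩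
    exact hξ ⟨η, by rw [← hu η, ← hη]; exact (u.apply_symm_apply ξ).symm⟩
  show u (f (u⁻¹ ξ)) = ξ
  rw [hf.2 _ hna]
  exact u.apply_symm_apply ξ

lemma eq_on {g : Homeo} (hf : Rigid f a b) (hg : Rigid g a b) (η : Cantor) :
    f (cat a η) = g (cat a η) :=
  (hf η).trans (hg η).symm

end Rigid

/-! ### The generators of `Ŝ` -/

section

variable {D : LMData}

lemma localAt_xx (s : List Bool) : LocalAt (D.xx s) s D.x := ⟨D.hxx s, D.hxx' s⟩

lemma localAt_yy (s : List Bool) : LocalAt (D.yy s) s D.y := ⟨D.hyy s, D.hyy' s⟩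

lemma xx_nil : D.xx [] = D.x := Homeomorph.ext fun ξ => by simpa using D.hxx [] ξ

lemma yy_nil : D.yy [] = D.y := Homeomorph.ext fun ξ => by simpa using D.hyy [] ξ

lemma localAt_yy_append (s c : List Bool) : LocalAt (D.yy (s ++ c)) s (D.yy c) := by
  refine ⟨fun η => ?_, fun ξ hξ => D.hyy' _ ξ fun h => hξ h.of_append_left⟩
  by_cases hp : IsPrefixOf c η
  · obtain ⟨ζ, rfl⟩ := hp
    rw [← cat_append, D.hyy, D.hyy, cat_append]
  · rw [D.hyy' c η hp, D.hyy' _ _ fun h => hp h.cancel_left]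

lemma Rigid.conj_xx {u : Homeo} {a b : List Bool} (hu : Rigid u a b) :
    u * D.xx a * u⁻¹ = D.xx b :=
  (hu.conj (localAt_xx a)).eq (localAt_xx b)

lemma Rigid.conj_yy {u : Homeo} {a b : List Bool} (hu : Rigid u a b) :
    u * D.yy a * u⁻¹ = D.yy b :=
  (hu.conj (localAt_yy a)).eq (localAt_yy b)

lemma Rigid.mul_yy {u : Homeo} {a b : List Bool} (hu : Rigid u a b) :
    u * D.yy a = D.yy b * u := by
  rw [← hu.conj_yy, inv_mul_cancel_right]

lemma commute_yy {a b : List Bool} (h : Incomp a b) : Commute (D.yy a) (D.yy b) :=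
  (localAt_yy a).commute (localAt_yy b) h

lemma rigid_xx (t : List Bool) {c c' : List Bool} (h : Rigid D.x c c') :
    Rigid (D.xx t) (t ++ c) (t ++ c') := fun η => by
  rw [cat_append, D.hxx, h, cat_append]

lemma rigid_x00 : Rigid D.x [false, false] [false] := D.hx00
lemma rigid_x01 : Rigid D.x [false, true] [true, false] := D.hx01
lemma rigid_x1 : Rigid D.x [true] [true, true] := D.hx1

lemma rigid_p_lt {n k : ℕ} (hk : k < n) :
    Rigid (D.p n) (replicate k true ++ [false]) (replicate (k + 1) true ++ [false]) :=
  fun η => D.hp1 n k η hk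
lemma rigid_p_eq (n : ℕ) :
    Rigid (D.p n) (replicate n true ++ [false]) (replicate (n + 1) true) := D.hp2 n
lemma rigid_p_top (n : ℕ) : Rigid (D.p n) (replicate (n + 1) true) [false] := D.hp3 n

lemma rigid_p0_0 : Rigid (D.p 0) [false] [true] := rigid_p_eq 0
lemma rigid_p0_1 : Rigid (D.p 0) [true] [false] := rigid_p_top 0
lemma rigid_p1_0 : Rigid (D.p 1) [false] [true, false] := rigid_p_lt zero_lt_one
lemma rigid_p1_10 : Rigid (D.p 1) [true, false] [true, true] := rigid_p_eq 1
lemma rigid_p1_11 : Rigid (D.p 1) [true, true] [false] := rigid_p_top 1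
lemma rigid_p2_0 : Rigid (D.p 2) [false] [true, false] := rigid_p_lt two_pos
lemma rigid_p2_10 : Rigid (D.p 2) [true, false] [true, true, false] := rigid_p_lt one_lt_two
lemma rigid_p2_110 : Rigid (D.p 2) [true, true, false] [true, true, true] := rigid_p_eq 2
lemma rigid_p2_111 : Rigid (D.p 2) [true, true, true] [false] := rigid_p_top 2

-- The paper's relation `y = x y₀ y₁₀⁻¹ y₁₁` for the right action.
lemma y_eq : D.y = D.yy [true, true] * (D.yy [true, false])⁻¹ * D.yy [false] * D.x := by
  have fix (a b : List Bool) (hab : Incomp a b) : Rigid (D.yy a) b b :=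
    (localAt_yy a).rigid_of_incomp hab
  have fix_inv (a b : List Bool) (hab : Incomp a b) : Rigid (D.yy a)⁻¹ b b :=
    (localAt_yy a).inv.rigid_of_incomp hab
  ext1 ξ
  simp only [homeo_mul_apply]
  obtain ⟨b, η, rfl⟩ := exists_cat_singleton ξ
  cases b
  · obtain ⟨c, ζ, rfl⟩ := exists_cat_singleton η
    rw [← cat_append, List.singleton_append]
    cases c
    · rw [D.hy00, D.hx00, D.hyy [false], fix_inv [true, false] [false] (by decide),
        fix [true, true] [false] (by decide)]
    · rw [D.hy01, D.hx01, fix [false] [true, false] (by decide), (localAt_yy _).inv.1,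
        fix [true, true] [true, false] (by decide)]
      rfl
  · rw [D.hy1, D.hx1, fix [false] [true, true] (by decide),
      fix_inv [true, false] [true, true] (by decide), D.hyy [true, true]]

lemma yy_eq (s : List Bool) :
    D.yy s = D.yy (s ++ [true, true]) * (D.yy (s ++ [true, false]))⁻¹ *
      D.yy (s ++ [false]) * D.xx s := by
  refine (localAt_yy s).eq ?_
  rw [y_eq]
  exact (((localAt_yy_append s _).mul (localAt_yy_append s _).inv).mul
    (localAt_yy_append s _)).mul (localAt_xx s)

lemma xx_mem_Tgrp (s : List Bool) : D.xx s ∈ Tgrp D := Subgroup.subset_closure (.inl ⟨s, rfl⟩)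

lemma p_mem_Tgrp (n : ℕ) : D.p n ∈ Tgrp D := Subgroup.subset_closure (.inr ⟨n, rfl⟩)

lemma x_mem_Tgrp : D.x ∈ Tgrp D := xx_nil (D := D) ▸ xx_mem_Tgrp []

lemma xx_mem_Shat (s : List Bool) : D.xx s ∈ Shat D :=
  Subgroup.subset_closure (.inl (.inl ⟨s, rfl⟩))

lemma yy_mem_Shat (s : List Bool) : D.yy s ∈ Shat D :=
  Subgroup.subset_closure (.inl (.inr ⟨s, rfl⟩))

lemma p_mem_Shat (n : ℕ) : D.p n ∈ Shat D := Subgroup.subset_closure (.inr ⟨n, rfl⟩)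

lemma Tgrp_le_Shat : Tgrp D ≤ Shat D := by
  rw [Tgrp, Subgroup.closure_le]
  rintro _ (⟨s, rfl⟩ | ⟨n, rfl⟩)
  exacts [xx_mem_Shat s, p_mem_Shat n]

lemma Tgrp_le_Sgrp : Tgrp D ≤ Sgrp D := fun _ hg => Subgroup.subset_closure (.inl hg)

lemma sgen_mem_Sgrp : sgen D ∈ Sgrp D := Subgroup.subset_closure (.inr rfl)

lemma Sgrp_le_Shat : Sgrp D ≤ Shat D := by
  rw [Sgrp, Subgroup.closure_le]
  rintro _ (hg | rfl)
  exacts [Tgrp_le_Shat hg, mul_mem (inv_mem (yy_mem_Shat _)) (yy_mem_Shat _)]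

def TMoves (D : LMData) (a b : List Bool) : Prop := ∃ u ∈ Tgrp D, Rigid u a b

namespace TMoves

variable {a b c : List Bool}

lemma refl (a : List Bool) : TMoves D a a := ⟨1, one_mem _, fun _ => rfl⟩

lemma symm (h : TMoves D a b) : TMoves D b a :=
  let ⟨u, hu, hr⟩ := h; ⟨u⁻¹, inv_mem hu, hr.inv⟩

lemma trans (h : TMoves D a b) (h' : TMoves D b c) : TMoves D a c :=
  let ⟨u, hu, hr⟩ := h; let ⟨v, hv, hr'⟩ := h'; ⟨v * u, mul_mem hv hu, hr.comp hr'⟩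

lemma of_x (h : Rigid D.x a b) (r : List Bool) : TMoves D (a ++ r) (b ++ r) :=
  ⟨D.x, x_mem_Tgrp, h.append r⟩

lemma of_p0 (h : Rigid (D.p 0) a b) (r : List Bool) : TMoves D (a ++ r) (b ++ r) :=
  ⟨D.p 0, p_mem_Tgrp 0, h.append r⟩

lemma cons_left (b : Bool) {t : List Bool} (ht : t ≠ []) : TMoves D (b :: t) t := by
  have zero_cons (t : List Bool) (ht : t ≠ []) : TMoves D (false :: t) t := by
    obtain ⟨c, r, rfl⟩ := List.exists_cons_of_ne_nil ht
    cases c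
    · exact of_x rigid_x00 r
    · exact (of_p0 rigid_p0_0 (true :: r)).trans (of_x rigid_x1 r).symm
  cases b
  · exact zero_cons t ht
  · exact (of_p0 rigid_p0_1 t).trans (zero_cons t ht)

lemma to_zero {s : List Bool} (hs : s ≠ []) : TMoves D s [false] := by
  induction s with
  | nil => exact absurd rfl hs
  | cons b t ih =>
    rcases eq_or_ne t [] with rfl | ht
    · cases b
      exacts [refl _, of_p0 rigid_p0_1 []]
    · exact (cons_left b ht).trans (ih ht)

lemma of_ne_nil (ha : a ≠ []) (hb : b ≠ []) : TMoves D a b :=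
  (to_zero ha).trans (to_zero hb).symm

end TMoves

/-! ### The elements `y_s` modulo `S` -/

lemma yy_coset_eq_of_rigid {u : Homeo} (hu : u ∈ Tgrp D) {a a' b b' : List Bool}
    (ha : Rigid u a a') (hb : Rigid u b b')
    (h : (D.yy a : Homeo ⧸ Sgrp D) = D.yy b) : (D.yy a' : Homeo ⧸ Sgrp D) = D.yy b' := by
  rw [QuotientGroup.eq] at h ⊢
  rw [← ha.conj_yy, ← hb.conj_yy]
  have hu' := Tgrp_le_Sgrp hu
  convert mul_mem (mul_mem hu' h) (inv_mem hu') using 1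
  group

lemma yy_coset_eq_sibling_of_ne_nil {t : List Bool} (ht : t ≠ []) :
    (D.yy (t ++ [false]) : Homeo ⧸ Sgrp D) = D.yy (t ++ [true]) := by
  have seed : (D.yy [true, true, false] : Homeo ⧸ Sgrp D) = D.yy [true, false] :=
    QuotientGroup.eq.mpr sgen_mem_Sgrp
  have h00 : (D.yy [false, false] : Homeo ⧸ Sgrp D) = D.yy [false, true] :=
    (yy_coset_eq_of_rigid (mul_mem (p_mem_Tgrp 1) (p_mem_Tgrp 2))
      (rigid_p2_110.comp (rigid_p1_11.append [true]))
      (rigid_p2_10.comp (rigid_p1_11.append [false])) seed).symm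
  obtain ⟨u, hu, hr⟩ := TMoves.of_ne_nil (D := D) (List.cons_ne_nil false []) ht
  exact yy_coset_eq_of_rigid hu (hr.append [false]) (hr.append [true]) h00

lemma yy_coset_eq_append_false (s : List Bool) :
    (D.yy (s ++ [false]) : Homeo ⧸ Sgrp D) = D.yy s := by
  have hsib : (D.yy (s ++ [true, false]) : Homeo ⧸ Sgrp D) = D.yy (s ++ [true, true]) := by
    simpa using yy_coset_eq_sibling_of_ne_nil (D := D) (t := s ++ [true]) (by simp)
  have hys := yy_eq (D := D) s
  have h0_11 := commute_yy (D := D) ((by decide : Incomp [false] [true, true]).append_left s)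
  have h0_10 := commute_yy (D := D) ((by decide : Incomp [false] [true, false]).append_left s)
  have h10_11 := commute_yy (D := D) ((by decide : Incomp [true, false] [true, true]).append_left s)
  set y₀ := D.yy (s ++ [false])
  set y₁₀ := D.yy (s ++ [true, false])
  set y₁₁ := D.yy (s ++ [true, true])
  have key : y₀⁻¹ * D.yy s = y₁₀⁻¹ * y₁₁ * D.xx s :=
    calc y₀⁻¹ * D.yy s = y₀⁻¹ * (y₁₁ * y₁₀⁻¹ * y₀) * D.xx s := by rw [hys]; group
      _ = y₁₀⁻¹ * y₁₁ * D.xx s := by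
        rw [← (h0_11.mul_right h0_10.inv_right).eq, h10_11.inv_left.eq]; group
  rw [QuotientGroup.eq, key]
  exact mul_mem (QuotientGroup.eq.mp hsib) (Tgrp_le_Sgrp (xx_mem_Tgrp s))

lemma yy_coset_eq_sibling (t : List Bool) :
    (D.yy (t ++ [false]) : Homeo ⧸ Sgrp D) = D.yy (t ++ [true]) := by
  rcases eq_or_ne t [] with rfl | ht
  -- The cones `0`, `1` are not the rigid image of two sibling cones: go through the cone `111`.
  · have h111_1 : (D.yy [true, true, true] : Homeo ⧸ Sgrp D) = D.yy [true] := by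
      rw [QuotientGroup.eq, yy_eq [true]]
      convert mul_mem sgen_mem_Sgrp (Tgrp_le_Sgrp (xx_mem_Tgrp (D := D) [true])) using 1
      simp only [sgen, List.cons_append, List.nil_append]
      group
    have h111_0 : (D.yy [true, true, true] : Homeo ⧸ Sgrp D) = D.yy [false] :=
      yy_coset_eq_of_rigid (p_mem_Tgrp 2) rigid_p2_110 rigid_p2_111
        (yy_coset_eq_sibling_of_ne_nil (t := [true, true]) (by simp))
    exact h111_0.symm.trans h111_1
  · exact yy_coset_eq_sibling_of_ne_nil ht

lemma yy_coset_eq_nil (a : List Bool) : (D.yy a : Homeo ⧸ Sgrp D) = D.yy [] := by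
  induction a using List.reverseRecOn with
  | nil => rfl
  | append_singleton s b ih =>
    cases b
    · exact (yy_coset_eq_append_false s).trans ih
    · exact (yy_coset_eq_sibling s).symm.trans ((yy_coset_eq_append_false s).trans ih)

lemma yy_inv_mul_yy_mem (a b : List Bool) : (D.yy a)⁻¹ * D.yy b ∈ Sgrp D :=
  QuotientGroup.eq.mp ((yy_coset_eq_nil a).trans (yy_coset_eq_nil b).symm)

lemma yy_mul_yy_inv_mem_of_incomp {a b : List Bool} (h : Incomp a b) :
    D.yy a * (D.yy b)⁻¹ ∈ Sgrp D := by
  rw [(commute_yy h).inv_right.eq]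
  exact yy_inv_mul_yy_mem b a

lemma yy_mul_yy_inv_mem_zero (a : List Bool) : D.yy a * (D.yy [false])⁻¹ ∈ Sgrp D := by
  have h10 : D.yy [true] * (D.yy [false])⁻¹ ∈ Sgrp D :=
    yy_mul_yy_inv_mem_of_incomp (by decide)
  have hx : D.x * (D.yy [true])⁻¹ = (D.yy [true, true])⁻¹ * D.x := by
    rw [mul_inv_eq_iff_eq_mul, mul_assoc, rigid_x1.mul_yy, inv_mul_cancel_left]
  match a with
  | [] =>
    have key : D.yy [] * (D.yy [true])⁻¹ = (D.yy [true, true] * (D.yy [true, false])⁻¹) *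
        (D.yy [false] * (D.yy [true, true])⁻¹) * D.x := by
      rw [yy_nil, y_eq, mul_assoc _ D.x, hx]; group
    have h1 : D.yy [] * (D.yy [true])⁻¹ ∈ Sgrp D := by
      rw [key]
      exact mul_mem (mul_mem (yy_mul_yy_inv_mem_of_incomp (by decide))
        (yy_mul_yy_inv_mem_of_incomp (by decide))) (Tgrp_le_Sgrp x_mem_Tgrp)
    simpa using mul_mem h1 h10
  | false :: r =>
    simpa using mul_mem (yy_mul_yy_inv_mem_of_incomp (incomp_cons Bool.false_ne_true r [])) h10
  | true :: r => exact yy_mul_yy_inv_mem_of_incomp (incomp_cons Bool.false_ne_true.symm r [])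

lemma yy_mul_yy_inv_mem (a b : List Bool) : D.yy a * (D.yy b)⁻¹ ∈ Sgrp D := by
  simpa using mul_mem (yy_mul_yy_inv_mem_zero (D := D) a) (inv_mem (yy_mul_yy_inv_mem_zero b))

lemma Sgrp_eq_closure :
    Sgrp D = Subgroup.closure (Set.range D.xx ∪ Set.range D.p ∪ {sgen D}) := by
  rw [Sgrp, Tgrp, Subgroup.closure_union, Subgroup.closure_union _ {sgen D}, Subgroup.closure_eq]

lemma conj_yy_mem_of_rigid {u : Homeo} (hu : u ∈ Sgrp D) {c c' : List Bool} (hr : Rigid u c c')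
    (b : List Bool) :
    D.yy b * u * (D.yy b)⁻¹ ∈ Sgrp D ∧ (D.yy b)⁻¹ * u * D.yy b ∈ Sgrp D := by
  have hc := hr.mul_yy (D := D)
  constructor
  · convert mul_mem (mul_mem (yy_mul_yy_inv_mem b c') hu) (yy_mul_yy_inv_mem c b) using 1
    calc D.yy b * u * (D.yy b)⁻¹ = D.yy b * (D.yy c')⁻¹ * (D.yy c' * u) * (D.yy b)⁻¹ := by
          group
      _ = _ := by rw [← hc]; group
  · convert mul_mem (mul_mem (yy_inv_mul_yy_mem b c') hu) (yy_inv_mul_yy_mem c b) using 1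
    calc (D.yy b)⁻¹ * u * D.yy b = (D.yy b)⁻¹ * (D.yy c' * u) * (D.yy c)⁻¹ * D.yy b := by
          rw [← hc]; group
      _ = _ := by group

lemma yy_mem_normalizer (b : List Bool) :
    D.yy b ∈ Subgroup.normalizer (Sgrp D : Set Homeo) := by
  have hgen : ∀ u ∈ Set.range D.xx ∪ Set.range D.p ∪ {sgen D},
      D.yy b * u * (D.yy b)⁻¹ ∈ Sgrp D ∧ (D.yy b)⁻¹ * u * D.yy b ∈ Sgrp D := by
    rintro _ ((⟨s, rfl⟩ | ⟨n, rfl⟩) | rfl)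
    · exact conj_yy_mem_of_rigid (Tgrp_le_Sgrp (xx_mem_Tgrp s)) (rigid_xx s rigid_x00) b
    · exact conj_yy_mem_of_rigid (Tgrp_le_Sgrp (p_mem_Tgrp n)) (rigid_p_top n) b
    · exact conj_yy_mem_of_rigid sgen_mem_Sgrp
        (((localAt_yy _).rigid_of_incomp (by decide : Incomp [true, false] [false])).comp
          ((localAt_yy _).inv.rigid_of_incomp (by decide : Incomp [true, true, false] [false]))) b
  rw [Sgrp_eq_closure] at hgen ⊢
  exact Subgroup.mem_normalizer_closure_of_conj (fun u hu => (hgen u hu).1)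
    fun u hu => (hgen u hu).2

lemma Shat_le_Sgrp_sup_zpowers : Shat D ≤ Sgrp D ⊔ Subgroup.zpowers (D.yy [true, false]) := by
  rw [Shat, Subgroup.closure_le]
  rintro _ ((⟨s, rfl⟩ | ⟨s, rfl⟩) | ⟨n, rfl⟩)
  · exact le_sup_left (a := Sgrp D) (Tgrp_le_Sgrp (xx_mem_Tgrp s))
  · simpa using mul_mem (le_sup_left (a := Sgrp D) (yy_mul_yy_inv_mem s [true, false]))
      (le_sup_right (a := Sgrp D) (Subgroup.mem_zpowers (D.yy [true, false])))
  · exact le_sup_left (a := Sgrp D) (Tgrp_le_Sgrp (p_mem_Tgrp n))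

lemma exists_mem_Sgrp_mul_zpow {g : Homeo} (hg : g ∈ Shat D) :
    ∃ s ∈ Sgrp D, ∃ k : ℤ, s * D.yy [true, false] ^ k = g := by
  have hsup := Shat_le_Sgrp_sup_zpowers hg
  rw [← SetLike.mem_coe, Subgroup.coe_mul_of_right_le_normalizer_left _ _
    (Subgroup.zpowers_le.mpr (yy_mem_normalizer _))] at hsup
  obtain ⟨s, hs, _, ⟨k, rfl⟩, rfl⟩ := hsup
  exact ⟨s, hs, k, rfl⟩

/-! ### Relations in `T` -/

lemma p_one_pow_three : D.p 1 ^ 3 = 1 := by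
  refine ext_staircase 2 (fun k hk η => ?_) fun η => ?_
  · interval_cases k <;> simp [pow_succ, rigid_p1_0 _, rigid_p1_10 _, rigid_p1_11 _]
  · simp [pow_succ, rigid_p1_0 _, rigid_p1_10 _, rigid_p1_11 _]

lemma p_two_pow_four : D.p 2 ^ 4 = 1 := by
  refine ext_staircase 3 (fun k hk η => ?_) fun η => ?_
  · interval_cases k <;>
      simp [pow_succ, rigid_p2_0 _, rigid_p2_10 _, rigid_p2_110 _, rigid_p2_111 _]
  · simp [pow_succ, rigid_p2_0 _, rigid_p2_10 _, rigid_p2_110 _, rigid_p2_111 _]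

lemma xx_nil_conj_p_zero : D.xx [] * D.p 0 * (D.xx [])⁻¹ = D.p 2 ^ 2 := by
  rw [xx_nil, pow_two]
  refine ext_staircase 3 (fun k hk => ?_) ?_
  · interval_cases k
    · exact ((rigid_x00.inv.comp (rigid_p0_0.append [false])).comp (rigid_x1.append [false])).eq_on
        (rigid_p2_0.comp rigid_p2_10)
    · exact ((rigid_x01.inv.comp (rigid_p0_0.append [true])).comp (rigid_x1.append [true])).eq_on
        (rigid_p2_10.comp rigid_p2_110)
    · exact (((rigid_x1.append [false]).inv.comp (rigid_p0_1.append [false])).comp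
        rigid_x00).eq_on (rigid_p2_110.comp rigid_p2_111)
  · exact (((rigid_x1.append [true]).inv.comp (rigid_p0_1.append [true])).comp rigid_x01).eq_on
      (rigid_p2_111.comp rigid_p2_0)

lemma p_succ_eq (n : ℕ) : D.p (n + 1) = D.p n * (D.xx (replicate n true))⁻¹ := by
  have hx (c c' : List Bool) (h : Rigid D.x c c') :
      Rigid (D.xx (replicate n true))⁻¹ (replicate n true ++ c') (replicate n true ++ c) :=
    (rigid_xx _ h).inv
  refine ext_staircase (n + 2) (fun k hk => ?_) ?_
  · rcases lt_or_ge k n with hkn | hkn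
    · have hfix : Rigid (D.xx (replicate n true))⁻¹ (replicate k true ++ [false])
          (replicate k true ++ [false]) := by
        refine (localAt_xx _).inv.rigid_of_incomp ?_
        obtain ⟨m, rfl⟩ := Nat.exists_eq_add_of_lt hkn
        rw [add_assoc, List.replicate_add, List.replicate_succ]
        exact (incomp_cons Bool.false_ne_true.symm _ _).append_left _
      exact (rigid_p_lt (by omega)).eq_on (hfix.comp (rigid_p_lt hkn))
    obtain rfl | rfl : n = k ∨ k = n + 1 := by omega
    · exact (rigid_p_lt n.lt_succ_self).eq_on
        ((hx _ _ rigid_x00).comp (by simpa using (rigid_p_eq n).append [false]))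
    · have h := (hx _ _ rigid_x01).comp (by simpa using (rigid_p_eq (D := D) n).append [true])
      exact (rigid_p_eq (n + 1)).eq_on (by simpa [List.replicate_succ'] using h)
  · have h := (hx _ _ rigid_x1).comp (by simpa [List.replicate_succ'] using rigid_p_top (D := D) n)
    exact (rigid_p_top (n + 1)).eq_on (by simpa [List.replicate_succ'] using h)

/-! ### `S` lies in `[Ŝ, Ŝ]` -/

lemma yy_inv_mul_yy_mem_commutator {a b : List Bool} (ha : a ≠ []) (hb : b ≠ []) :
    (D.yy a)⁻¹ * D.yy b ∈ ⁅Shat D, Shat D⁆ := by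
  obtain ⟨u, hu, hr⟩ := TMoves.of_ne_nil (D := D) ha hb
  rw [← hr.conj_yy]
  exact Subgroup.inv_mul_conj_mem_commutator (yy_mem_Shat a) (Tgrp_le_Shat hu)

lemma xx_inv_mul_xx_mem_commutator {a b : List Bool} (ha : a ≠ []) (hb : b ≠ []) :
    (D.xx a)⁻¹ * D.xx b ∈ ⁅Shat D, Shat D⁆ := by
  obtain ⟨u, hu, hr⟩ := TMoves.of_ne_nil (D := D) ha hb
  rw [← hr.conj_xx]
  exact Subgroup.inv_mul_conj_mem_commutator (xx_mem_Shat a) (Tgrp_le_Shat hu)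

lemma xx_one_mem_commutator : D.xx [true] ∈ ⁅Shat D, Shat D⁆ := by
  have h : D.xx [true] = ((D.yy [true, false])⁻¹ * D.yy [true, true, false]) *
      ((D.yy [true])⁻¹ * D.yy [true, true, true])⁻¹ := by
    rw [yy_eq [true]]; simp only [List.cons_append, List.nil_append]; group
  rw [h]
  exact mul_mem (yy_inv_mul_yy_mem_commutator (by simp) (by simp))
    (inv_mem (yy_inv_mul_yy_mem_commutator (by simp) (by simp)))

lemma xx_nil_and_p_zero_mem_commutator :
    D.xx [] ∈ ⁅Shat D, Shat D⁆ ∧ D.p 0 ∈ ⁅Shat D, Shat D⁆ := by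
  have h := mem_commutator_of_relations (G := Shat D)
    (a := ⟨D.p 0, p_mem_Shat 0⟩) (b := ⟨D.xx [], xx_mem_Shat []⟩)
    (c := ⟨D.xx [true], xx_mem_Shat [true]⟩) (u := ⟨D.p 1, p_mem_Shat 1⟩)
    (v := ⟨D.p 2, p_mem_Shat 2⟩) ((Subgroup.mk_mem_commutator_iff _).mpr xx_one_mem_commutator)
    (Subtype.ext (p_succ_eq 0)) (Subtype.ext (p_succ_eq 1)) (Subtype.ext p_one_pow_three)
    (Subtype.ext p_two_pow_four) (Subtype.ext xx_nil_conj_p_zero)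
  exact ⟨(Subgroup.mk_mem_commutator_iff _).mp h.2, (Subgroup.mk_mem_commutator_iff _).mp h.1⟩

lemma xx_mem_commutator (t : List Bool) : D.xx t ∈ ⁅Shat D, Shat D⁆ := by
  rcases eq_or_ne t [] with rfl | ht
  · exact xx_nil_and_p_zero_mem_commutator.1
  · simpa using mul_mem xx_one_mem_commutator
      (xx_inv_mul_xx_mem_commutator (a := [true]) (by simp) ht)

lemma p_mem_commutator (n : ℕ) : D.p n ∈ ⁅Shat D, Shat D⁆ := by
  induction n with
  | zero => exact xx_nil_and_p_zero_mem_commutator.2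
  | succ n ih =>
    rw [p_succ_eq]
    exact mul_mem ih (inv_mem (xx_mem_commutator _))

lemma Sgrp_le_commutator : Sgrp D ≤ ⁅Shat D, Shat D⁆ := by
  rw [Sgrp_eq_closure, Subgroup.closure_le]
  rintro _ ((⟨s, rfl⟩ | ⟨n, rfl⟩) | rfl)
  · exact xx_mem_commutator s
  · exact p_mem_commutator n
  · exact yy_inv_mul_yy_mem_commutator (by simp) (by simp)

end

lemma Sgrp_le_map_ker {D : LMData} (φ : ↥(Shat D) →* Multiplicative ℤ)
    (hx : ∀ (s : List Bool) (h : D.xx s ∈ Shat D), φ ⟨D.xx s, h⟩ = Multiplicative.ofAdd 0)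
    (hy : ∀ (s : List Bool) (h : D.yy s ∈ Shat D), φ ⟨D.yy s, h⟩ = Multiplicative.ofAdd 1)
    (hp : ∀ (n : ℕ) (h : D.p n ∈ Shat D), φ ⟨D.p n, h⟩ = Multiplicative.ofAdd 0) :
    Sgrp D ≤ φ.ker.map (Shat D).subtype := by
  rw [Sgrp_eq_closure, Subgroup.closure_le]
  rintro _ ((⟨s, rfl⟩ | ⟨n, rfl⟩) | rfl)
  · exact ⟨⟨_, xx_mem_Shat s⟩, hx s _, rfl⟩
  · exact ⟨⟨_, p_mem_Shat n⟩, hp n _, rfl⟩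
  · refine ⟨⟨_, yy_mem_Shat _⟩⁻¹ * ⟨_, yy_mem_Shat _⟩, ?_, rfl⟩
    rw [SetLike.mem_coe, MonoidHom.mem_ker, map_mul, map_inv, hy, hy, inv_mul_cancel]

lemma map_ker_eq_Sgrp {D : LMData} (φ : ↥(Shat D) →* Multiplicative ℤ)
    (hx : ∀ (s : List Bool) (h : D.xx s ∈ Shat D), φ ⟨D.xx s, h⟩ = Multiplicative.ofAdd 0)
    (hy : ∀ (s : List Bool) (h : D.yy s ∈ Shat D), φ ⟨D.yy s, h⟩ = Multiplicative.ofAdd 1)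
    (hp : ∀ (n : ℕ) (h : D.p n ∈ Shat D), φ ⟨D.p n, h⟩ = Multiplicative.ofAdd 0) :
    φ.ker.map (Shat D).subtype = Sgrp D := by
  refine le_antisymm ?_ (Sgrp_le_map_ker φ hx hy hp)
  rintro _ ⟨⟨g, hg⟩, hker, rfl⟩
  obtain ⟨s, hs, k, rfl⟩ := exists_mem_Sgrp_mul_zpow hg
  have hs' : φ ⟨s, Sgrp_le_Shat hs⟩ = 1 :=
    (Subgroup.mem_map_iff_mem (Shat D).subtype_injective).mp (Sgrp_le_map_ker φ hx hy hp hs)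
  have hφ : φ ⟨s * D.yy [true, false] ^ k, hg⟩ = Multiplicative.ofAdd k := by
    rw [show (⟨s * D.yy [true, false] ^ k, hg⟩ : Shat D) =
      ⟨s, Sgrp_le_Shat hs⟩ * ⟨D.yy [true, false], yy_mem_Shat _⟩ ^ k from rfl,
      map_mul, map_zpow, hs', hy, one_mul, ← ofAdd_zsmul, smul_eq_mul, mul_one]
  obtain rfl : k = 0 := by simpa [hφ] using hker
  simpa using hs

/-- any homomorphism `φ : Ŝ → ℤ` with `φ(x_s) = 0`, `φ(y_s) = 1`,
`φ(p_n) = 0` has kernel exactly `S`; equivalently `S = [Ŝ, Ŝ]`. -/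
theorem statement8 (D : LMData) (φ : ↥(Shat D) →* Multiplicative ℤ)
    (hx : ∀ (s : List Bool) (h : D.xx s ∈ Shat D), φ ⟨D.xx s, h⟩ = Multiplicative.ofAdd 0)
    (hy : ∀ (s : List Bool) (h : D.yy s ∈ Shat D), φ ⟨D.yy s, h⟩ = Multiplicative.ofAdd 1)
    (hp : ∀ (n : ℕ) (h : D.p n ∈ Shat D), φ ⟨D.p n, h⟩ = Multiplicative.ofAdd 0) :
    (∀ (g : Cantor ≃ₜ Cantor) (h : g ∈ Shat D), (φ ⟨g, h⟩ = 1 ↔ g ∈ Sgrp D)) ∧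
    Sgrp D = ⁅Shat D, Shat D⁆ := by
  have hker := map_ker_eq_Sgrp φ hx hy hp
  refine ⟨fun g hg => ?_, le_antisymm Sgrp_le_commutator ?_⟩
  · rw [← hker, ← MonoidHom.mem_ker]
    exact (Subgroup.mem_map_iff_mem (Shat D).subtype_injective).symm
  · rw [← hker, ← (Shat D).map_subtype_commutator]
    exact Subgroup.map_mono (Abelianization.commutator_subset_ker φ)
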